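/- For every X ⊆ {T, B, 4, 5}, the sequent calculi CKX (CK extended by the axioms in X in both their a- and b-versions) and IKX (CKX extended by the axioms ¬◇⊥, ◇(p ∨ q) → ◇p ∨ ◇q, and (◇p → □q) → □(p → q)) have the Visser–Harrop property; in particular each of them has the disjunction property: if the calculus proves (⇒ C ∨ D) then it proves (⇒ C) or (⇒ D). -/
import Mathlib


set_option autoImplicit false

namespace UPT

/-- Modal formulas over atoms of type `α` (the language `ℒ = {∧,∨,→,⊤,⊥,□,◇}`). -/
inductive Fml (α : Type) : Type where
  | atom : α → Fml α
  | top  : Fml α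
  | bot  : Fml α
  | and  : Fml α → Fml α → Fml α
  | or   : Fml α → Fml α → Fml α
  | imp  : Fml α → Fml α → Fml α
  | box  : Fml α → Fml α
  | dia  : Fml α → Fml α
deriving DecidableEq

variable {α β : Type}

/-- Simultaneous substitution of formulas for atoms. -/
def Fml.subst (σ : β → Fml α) : Fml β → Fml α
  | .atom b  => σ b
  | .top     => .top
  | .bot     => .bot
  | .and A B => .and (A.subst σ) (B.subst σ)
  | .or A B  => .or (A.subst σ) (B.subst σ)
  | .imp A B => .imp (A.subst σ) (B.subst σ)
  | .box A   => .box (A.subst σ)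
  | .dia A   => .dia (A.subst σ)

/-- A sequent: a finite multiset antecedent together with a succedent
containing at most one formula. -/
abbrev Seq (α : Type) : Type := Multiset (Fml α) × Option (Fml α)

/-- A rule set relates a (finite) list of premise sequents to a conclusion sequent. -/
abbrev RuleSet (α : Type) : Type := List (Seq α) → Seq α → Prop

/-- The axioms and rules of the single-conclusion sequent calculus `LJ`, stated
schematically: they are closed under substituting arbitrary formulas for atoms
and arbitrary multisets (resp. succedents) for the context variables. -/
inductive LJRule : List (Seq α) → Seq α → Prop where
  | id (Γ : Multiset (Fml α)) (A : Fml α) : LJRule [] (A ::ₘ Γ, some A)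
  | botL (Γ : Multiset (Fml α)) (Δ : Option (Fml α)) : LJRule [] (.bot ::ₘ Γ, Δ)
  | topR (Γ : Multiset (Fml α)) : LJRule [] (Γ, some .top)
  | wL (A : Fml α) (Γ : Multiset (Fml α)) (Δ : Option (Fml α)) :
      LJRule [(Γ, Δ)] (A ::ₘ Γ, Δ)
  | wR (A : Fml α) (Γ : Multiset (Fml α)) : LJRule [(Γ, none)] (Γ, some A)
  | cL (A : Fml α) (Γ : Multiset (Fml α)) (Δ : Option (Fml α)) :
      LJRule [(A ::ₘ A ::ₘ Γ, Δ)] (A ::ₘ Γ, Δ)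
  | cut (A : Fml α) (Γ : Multiset (Fml α)) (Δ : Option (Fml α)) :
      LJRule [(Γ, some A), (A ::ₘ Γ, Δ)] (Γ, Δ)
  | andL₁ (A B : Fml α) (Γ : Multiset (Fml α)) (Δ : Option (Fml α)) :
      LJRule [(A ::ₘ Γ, Δ)] (.and A B ::ₘ Γ, Δ)
  | andL₂ (A B : Fml α) (Γ : Multiset (Fml α)) (Δ : Option (Fml α)) :
      LJRule [(B ::ₘ Γ, Δ)] (.and A B ::ₘ Γ, Δ)
  | andR (A B : Fml α) (Γ : Multiset (Fml α)) :
      LJRule [(Γ, some A), (Γ, some B)] (Γ, some (.and A B))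
  | orL (A B : Fml α) (Γ : Multiset (Fml α)) (Δ : Option (Fml α)) :
      LJRule [(A ::ₘ Γ, Δ), (B ::ₘ Γ, Δ)] (.or A B ::ₘ Γ, Δ)
  | orR₁ (A B : Fml α) (Γ : Multiset (Fml α)) : LJRule [(Γ, some A)] (Γ, some (.or A B))
  | orR₂ (A B : Fml α) (Γ : Multiset (Fml α)) : LJRule [(Γ, some B)] (Γ, some (.or A B))
  | impL (A B : Fml α) (Γ : Multiset (Fml α)) (Δ : Option (Fml α)) :
      LJRule [(Γ, some A), (B ::ₘ Γ, Δ)] (.imp A B ::ₘ Γ, Δ)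
  | impR (A B : Fml α) (Γ : Multiset (Fml α)) :
      LJRule [(A ::ₘ Γ, some B)] (Γ, some (.imp A B))

/-- The rule `K_□`: from `Γ ⇒ A` infer `□Γ ⇒ □A`. -/
inductive KBoxRule : List (Seq α) → Seq α → Prop where
  | mk (Γ : Multiset (Fml α)) (A : Fml α) :
      KBoxRule [(Γ, some A)] (Γ.map Fml.box, some (.box A))

/-- The rule `K_◇`: from `Γ, A ⇒ B` infer `□Γ, ◇A ⇒ ◇B`. -/
inductive KDiaRule : List (Seq α) → Seq α → Prop where
  | mk (Γ : Multiset (Fml α)) (A B : Fml α) :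
      KDiaRule [(A ::ₘ Γ, some B)] (.dia A ::ₘ Γ.map Fml.box, some (.dia B))

/-- The rule `◇L`: from `Γ, A ⇒ B` infer `Γ, ◇A ⇒ ◇B`. -/
inductive DiaLRule : List (Seq α) → Seq α → Prop where
  | mk (Γ : Multiset (Fml α)) (A B : Fml α) :
      DiaLRule [(A ::ₘ Γ, some B)] (.dia A ::ₘ Γ, some (.dia B))

/-- Adding a set `Ax` of axioms to a calculus: the initial sequents `⇒ σ(A)`
for every substitution instance `σ(A)` of every `A ∈ Ax`. -/
def axRule (Ax : Fml α → Prop) : RuleSet α := fun ps c =>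
  ps = [] ∧ ∃ (A : Fml α) (σ : α → Fml α), Ax A ∧ c = ((0 : Multiset (Fml α)), some (A.subst σ))

/-- Using a set of sequents as additional initial sequents (assumptions). -/
def hypRule (H : Set (Seq α)) : RuleSet α := fun ps c => ps = [] ∧ c ∈ H

/-- The sequent calculus `LJ+Ax`. -/
def LJSys (Ax : Fml α → Prop) : RuleSet α := fun ps c => LJRule ps c ∨ axRule Ax ps c

/-- The sequent calculus `CK+Ax = LJ + K_□ + K_◇ + Ax`. -/
def CKSys (Ax : Fml α → Prop) : RuleSet α := fun ps c =>
  LJRule ps c ∨ KBoxRule ps c ∨ KDiaRule ps c ∨ axRule Ax ps c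

/-- The sequent calculus `CK_□+Ax = LJ + K_□ + Ax`. -/
def CKBoxSys (Ax : Fml α → Prop) : RuleSet α := fun ps c =>
  LJRule ps c ∨ KBoxRule ps c ∨ axRule Ax ps c

/-- The sequent calculus `BLL+Ax = LJ + ◇L + Ax`. -/
def BLLSys (Ax : Fml α → Prop) : RuleSet α := fun ps c =>
  LJRule ps c ∨ DiaLRule ps c ∨ axRule Ax ps c

/-- Provability of a sequent in the calculus generated by a rule set. -/
inductive Derives (R : RuleSet α) : Multiset (Fml α) → Option (Fml α) → Prop where
  | step {ps : List (Seq α)} {c : Seq α} (hr : R ps c)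
      (hp : ∀ p ∈ ps, Derives R p.1 p.2) : Derives R c.1 c.2

/-- Basic formulas: generated from atoms, `⊤`, `⊥` by `∧`, `∨`, `◇`. -/
inductive Basic : Fml α → Prop where
  | atom (a : α) : Basic (.atom a)
  | top : Basic (.top : Fml α)
  | bot : Basic (.bot : Fml α)
  | and {A B : Fml α} : Basic A → Basic B → Basic (.and A B)
  | or {A B : Fml α} : Basic A → Basic B → Basic (.or A B)
  | dia {A : Fml α} : Basic A → Basic (.dia A)

/-- Almost positive formulas: generated from basic formulas by `∧`, `∨`, `□`, `◇`
and implications `A → B` with `A` basic and `B` almost positive. -/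
inductive AlmostPos : Fml α → Prop where
  | basic {A : Fml α} : Basic A → AlmostPos A
  | and {A B : Fml α} : AlmostPos A → AlmostPos B → AlmostPos (.and A B)
  | or {A B : Fml α} : AlmostPos A → AlmostPos B → AlmostPos (.or A B)
  | box {A : Fml α} : AlmostPos A → AlmostPos (.box A)
  | dia {A : Fml α} : AlmostPos A → AlmostPos (.dia A)
  | imp {A B : Fml α} : Basic A → AlmostPos B → AlmostPos (.imp A B)

/-- Constructive formulas: generated from basic formulas by `∧`, `□` and
implications `A → B` with `A` almost positive and `B` constructive. -/
inductive Constructive : Fml α → Prop where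
  | basic {A : Fml α} : Basic A → Constructive A
  | and {A B : Fml α} : Constructive A → Constructive B → Constructive (.and A B)
  | box {A : Fml α} : Constructive A → Constructive (.box A)
  | imp {A B : Fml α} : AlmostPos A → Constructive B → Constructive (.imp A B)

/-- Harrop formulas: atoms, `⊥`, `⊤`, closed under `∧`, `□`, and implications
`A → B` with `A` arbitrary and `B` Harrop. -/
inductive Harrop : Fml α → Prop where
  | atom (a : α) : Harrop (.atom a)
  | top : Harrop (.top : Fml α)
  | bot : Harrop (.bot : Fml α)
  | and {A B : Fml α} : Harrop A → Harrop B → Harrop (.and A B)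
  | box {A : Fml α} : Harrop A → Harrop (.box A)
  | imp (A : Fml α) {B : Fml α} : Harrop B → Harrop (.imp A B)

/-- Conjunction of a list of formulas (`⋀∅ = ⊤`). -/
def conj : List (Fml α) → Fml α
  | [] => .top
  | [A] => A
  | A :: B :: l => .and A (conj (B :: l))

/-- Disjunction of a list of formulas (`⋁∅ = ⊥`). -/
def disj : List (Fml α) → Fml α
  | [] => .bot
  | [A] => A
  | A :: B :: l => .or A (disj (B :: l))

/-- Disjunction of a succedent (at most one formula; `⋁∅ = ⊥`). -/
def odisj : Option (Fml α) → Fml α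
  | none => .bot
  | some A => A

/-- The multiset `{A_i → B_i}_{i ∈ I}` of implications of an indexed family. -/
def imps (AB : List (Fml α × Fml α)) : Multiset (Fml α) :=
  ↑(AB.map fun p => Fml.imp p.1 p.2)

/-- The conjunction `⋀_{i∈I} (A_i → B_i)` of an indexed family of implications. -/
def impConj (AB : List (Fml α × Fml α)) : Fml α :=
  conj (AB.map fun p => Fml.imp p.1 p.2)

/-- Truth in the one-node *irreflexive* frame `𝒦ᵢ` under a Boolean valuation:
`□A` is always true and `◇A` is always false; the propositional connectives
are evaluated classically. -/
def evalI (v : α → Bool) : Fml α → Bool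
  | .atom a  => v a
  | .top     => true
  | .bot     => false
  | .and A B => evalI v A && evalI v B
  | .or A B  => evalI v A || evalI v B
  | .imp A B => !evalI v A || evalI v B
  | .box _   => true
  | .dia _   => false

/-- Truth in the one-node *reflexive* frame `𝒦ᵣ` under a Boolean valuation:
`□A` and `◇A` take the value of `A`. -/
def evalR (v : α → Bool) : Fml α → Bool
  | .atom a  => v a
  | .top     => true
  | .bot     => false
  | .and A B => evalR v A && evalR v B
  | .or A B  => evalR v A || evalR v B
  | .imp A B => !evalR v A || evalR v B
  | .box A   => evalR v A
  | .dia A   => evalR v A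

/-- Validity of a sequent with respect to a one-node semantics: under every
valuation, if all formulas of the antecedent are true then so is the succedent. -/
def SeqValid (ev : (α → Bool) → Fml α → Bool) (Γ : Multiset (Fml α)) (Δ : Option (Fml α)) :
    Prop :=
  ∀ v : α → Bool, (∀ A ∈ Γ, ev v A = true) → ∃ B ∈ Δ, ev v B = true

/-- `CK+Ax` is T-free: every provable sequent is valid in the irreflexive node frame. -/
def TFree (Ax : Fml α → Prop) : Prop :=
  ∀ (Γ : Multiset (Fml α)) (Δ : Option (Fml α)), Derives (CKSys Ax) Γ Δ → SeqValid evalI Γ Δ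

/-- `CK+Ax` is T-full: every provable sequent is valid in the reflexive node
frame and the calculus proves `⇒ □p → p` and `⇒ p → ◇p`. -/
def TFull (Ax : Fml α → Prop) : Prop :=
  (∀ (Γ : Multiset (Fml α)) (Δ : Option (Fml α)), Derives (CKSys Ax) Γ Δ → SeqValid evalR Γ Δ) ∧
  (∀ a : α, Derives (CKSys Ax) 0 (some (.imp (.box (.atom a)) (.atom a)))) ∧
  (∀ a : α, Derives (CKSys Ax) 0 (some (.imp (.atom a) (.dia (.atom a)))))

/-- Classical validity of a (modality-free) sequent: `⋀Γ → ⋁Δ` is true under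
every Boolean valuation of the atoms. -/
def ClValid (Γ : Multiset (Fml α)) (Δ : Option (Fml α)) : Prop :=
  ∀ v : α → Bool, (∀ A ∈ Γ, evalI v A = true) → ∃ B ∈ Δ, evalI v B = true

/-- Nonempty conjunctions of atoms. -/
inductive AtomConj : Fml α → Prop where
  | single (a : α) : AtomConj (.atom a)
  | and {A B : Fml α} : AtomConj A → AtomConj B → AtomConj (.and A B)

/-- Implicational Horn formulas: `⊥`, atoms, and implications `⋀Q → r` with `Q`
a nonempty multiset of atoms and `r` an atom or `⊥`. -/
inductive ImpHorn : Fml α → Prop where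
  | bot : ImpHorn (.bot : Fml α)
  | atom (a : α) : ImpHorn (.atom a)
  | impAtom {A : Fml α} (hA : AtomConj A) (a : α) : ImpHorn (.imp A (.atom a))
  | impBot {A : Fml α} (hA : AtomConj A) : ImpHorn (.imp A .bot)

/-- Formulas of the form `◇^n p` with `p` an atom and `n ≥ 0`. -/
inductive DiaPowAtom : Fml α → Prop where
  | atom (a : α) : DiaPowAtom (.atom a)
  | dia {A : Fml α} : DiaPowAtom A → DiaPowAtom (.dia A)

/-- Nonempty conjunctions `⋀_{i=1}^k ◇^{n_i} p_i` of formulas `◇^{n_i} p_i`. -/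
inductive DiaConj : Fml α → Prop where
  | single {A : Fml α} : DiaPowAtom A → DiaConj A
  | and {A B : Fml α} : DiaConj A → DiaConj B → DiaConj (.and A B)

/-- Modal Horn formulas: `⊥` and atoms, closed under `□` and under implications
`A → B` with `A = ⋀_{i=1}^k ◇^{n_i} p_i` and `B` modal Horn. -/
inductive ModalHorn : Fml α → Prop where
  | bot : ModalHorn (.bot : Fml α)
  | atom (a : α) : ModalHorn (.atom a)
  | box {A : Fml α} : ModalHorn A → ModalHorn (.box A)
  | imp {A B : Fml α} : DiaConj A → ModalHorn B → ModalHorn (.imp A B)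

/-- The predicate "all atoms of the formula satisfy `P`". -/
def Fml.AtomsIn (P : α → Prop) : Fml α → Prop
  | .atom a  => P a
  | .top     => True
  | .bot     => True
  | .and A B => A.AtomsIn P ∧ B.AtomsIn P
  | .or A B  => A.AtomsIn P ∧ B.AtomsIn P
  | .imp A B => A.AtomsIn P ∧ B.AtomsIn P
  | .box A   => A.AtomsIn P
  | .dia A   => A.AtomsIn P

/-- No `◇` occurs in the formula. -/
def Fml.DiaFree : Fml α → Prop
  | .atom _  => True
  | .top     => True
  | .bot     => True
  | .and A B => A.DiaFree ∧ B.DiaFree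
  | .or A B  => A.DiaFree ∧ B.DiaFree
  | .imp A B => A.DiaFree ∧ B.DiaFree
  | .box A   => A.DiaFree
  | .dia _   => False

/-- No `□` occurs in the formula. -/
def Fml.BoxFree : Fml α → Prop
  | .atom _  => True
  | .top     => True
  | .bot     => True
  | .and A B => A.BoxFree ∧ B.BoxFree
  | .or A B  => A.BoxFree ∧ B.BoxFree
  | .imp A B => A.BoxFree ∧ B.BoxFree
  | .box _   => False
  | .dia A   => A.BoxFree

/-- The formula is modality-free (propositional). -/
def Fml.ModFree : Fml α → Prop
  | .atom _  => True
  | .top     => True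
  | .bot     => True
  | .and A B => A.ModFree ∧ B.ModFree
  | .or A B  => A.ModFree ∧ B.ModFree
  | .imp A B => A.ModFree ∧ B.ModFree
  | .box _   => False
  | .dia _   => False

/-- An angling of the language: an injection `φ ↦ ⟨φ⟩` from formulas into the
atoms whose image (the angled atoms) is disjoint from a fixed infinite set of
plain atoms. -/
structure Angling (α : Type) where
  angle : Fml α → α
  plain : Set α
  inj : Function.Injective angle
  plain_infinite : plain.Infinite
  disjoint : ∀ φ : Fml α, angle φ ∉ plain

/-- `a` is an angled atom. -/
def Angling.Angled (S : Angling α) (a : α) : Prop := ∃ φ : Fml α, S.angle φ = a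

/-- The translation `t`: `⊥^t = ⊥`, `p^t = ⟨p⟩`, `⊤^t = ⟨⊤⟩`,
`(A ∘ B)^t = (A^t ∘ B^t) ∧ ⟨A ∘ B⟩` and `(○A)^t = (○A^t) ∧ ⟨○A⟩`. -/
def Angling.tr (S : Angling α) : Fml α → Fml α
  | .atom a  => .atom (S.angle (.atom a))
  | .top     => .atom (S.angle .top)
  | .bot     => .bot
  | .and A B => .and (.and (S.tr A) (S.tr B)) (.atom (S.angle (.and A B)))
  | .or A B  => .and (.or (S.tr A) (S.tr B)) (.atom (S.angle (.or A B)))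
  | .imp A B => .and (.imp (S.tr A) (S.tr B)) (.atom (S.angle (.imp A B)))
  | .box A   => .and (.box (S.tr A)) (.atom (S.angle (.box A)))
  | .dia A   => .and (.dia (S.tr A)) (.atom (S.angle (.dia A)))

/-- Action of the standard substitution on atoms: an angled atom `⟨φ⟩` is sent
to `φ`; plain atoms are fixed. -/
noncomputable def Angling.stdAtom (S : Angling α) (a : α) : Fml α :=
  haveI := Classical.propDecidable (∃ φ : Fml α, S.angle φ = a)
  if h : ∃ φ : Fml α, S.angle φ = a then h.choose else .atom a

/-- The standard substitution `s`: replaces each angled atom `⟨φ⟩` by `φ`,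
fixes the plain atoms, and commutes with all connectives. -/
noncomputable def Angling.std (S : Angling α) : Fml α → Fml α :=
  Fml.subst S.stdAtom

/-- The Visser–Harrop property of a calculus. -/
def VisserHarrop (R : RuleSet α) : Prop :=
  ∀ (Γ : Multiset (Fml α)), (∀ A ∈ Γ, Harrop A) →
  ∀ (AB : List (Fml α × Fml α)) (C D : Fml α),
    Derives R (Γ + imps AB) (some (.or C D)) →
    Derives R (Γ + imps AB) (some C) ∨
    Derives R (Γ + imps AB) (some D) ∨
    ∃ p ∈ AB, Derives R (Γ + imps AB) (some p.1)

/-- The disjunction property of a calculus. -/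
def DisjProp (R : RuleSet α) : Prop :=
  ∀ C D : Fml α, Derives R 0 (some (.or C D)) →
    Derives R 0 (some C) ∨ Derives R 0 (some D)

/-- The formula interpretation `I(Γ ⇒ Δ) = ⋀Γ → ⋁Δ` belongs to `L` (stated for
every enumeration of the antecedent multiset as a list). -/
def interpIn (L : Set (Fml α)) (s : Seq α) : Prop :=
  ∀ l : List (Fml α), (↑l : Multiset (Fml α)) = s.1 → Fml.imp (conj l) (odisj s.2) ∈ L

/- Named modal axioms (with `p := atom 0`, `q := atom 1`). -/
def axTa : Fml ℕ := .imp (.box (.atom 0)) (.atom 0)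
def axTb : Fml ℕ := .imp (.atom 0) (.dia (.atom 0))
def axBa : Fml ℕ := .imp (.dia (.box (.atom 0))) (.atom 0)
def axBb : Fml ℕ := .imp (.atom 0) (.box (.dia (.atom 0)))
def ax4a : Fml ℕ := .imp (.box (.atom 0)) (.box (.box (.atom 0)))
def ax4b : Fml ℕ := .imp (.dia (.dia (.atom 0))) (.dia (.atom 0))
def ax5a : Fml ℕ := .imp (.dia (.box (.atom 0))) (.box (.atom 0))
def ax5b : Fml ℕ := .imp (.dia (.atom 0)) (.box (.dia (.atom 0)))
def axDiaBot : Fml ℕ := .imp (.dia .bot) .bot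
def axDiaOr : Fml ℕ :=
  .imp (.dia (.or (.atom 0) (.atom 1))) (.or (.dia (.atom 0)) (.dia (.atom 1)))
def axBoxImp : Fml ℕ :=
  .imp (.imp (.dia (.atom 0)) (.box (.atom 1))) (.box (.imp (.atom 0) (.atom 1)))

/-- The axioms of `X ⊆ {T, B, 4, 5}` in both their `a`- and `b`-versions. -/
def XAxioms (tT tB t4 t5 : Bool) : Set (Fml ℕ) :=
  (if tT then ({axTa, axTb} : Set (Fml ℕ)) else ∅) ∪
  (if tB then ({axBa, axBb} : Set (Fml ℕ)) else ∅) ∪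
  (if t4 then ({ax4a, ax4b} : Set (Fml ℕ)) else ∅) ∪
  (if t5 then ({ax5a, ax5b} : Set (Fml ℕ)) else ∅)

/-- The additional axioms of `IK` over `CK`. -/
def IKExtra : Set (Fml ℕ) := {axDiaBot, axDiaOr, axBoxImp}

/-- The right rule with premises `{Γ, φ̄_i ⇒ ψ̄_i}_{i∈I}` and conclusion
`Γ, θ̄ ⇒ η̄`, closed under all substitutions of formulas for atoms and
multisets for the context `Γ`. -/
def rightRuleInst (prems : List (List (Fml α) × Option (Fml α)))
    (θ : List (Fml α)) (η : Option (Fml α)) : RuleSet α := fun ps c =>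
  ∃ (σ : α → Fml α) (Γ : Multiset (Fml α)),
    ps = prems.map (fun pr =>
        ((Γ + ↑(pr.1.map (Fml.subst σ)) : Multiset (Fml α)), pr.2.map (Fml.subst σ))) ∧
    c = ((Γ + ↑(θ.map (Fml.subst σ)) : Multiset (Fml α)), η.map (Fml.subst σ))

/-- The left rule with premises `{Γ, φ̄_i ⇒ ψ̄_i}_{i∈I} ∪ {Γ, θ̄_j ⇒ Δ}_{j∈J}`
and conclusion `Γ, η̄ ⇒ Δ`, closed under all substitutions of formulas for
atoms and multisets for `Γ` and `Δ`. -/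
def leftRuleInst (prems : List (List (Fml α) × Option (Fml α)))
    (lefts : List (List (Fml α))) (η : List (Fml α)) : RuleSet α := fun ps c =>
  ∃ (σ : α → Fml α) (Γ : Multiset (Fml α)) (Δ : Option (Fml α)),
    ps = prems.map (fun pr =>
          ((Γ + ↑(pr.1.map (Fml.subst σ)) : Multiset (Fml α)), pr.2.map (Fml.subst σ)))
        ++ lefts.map (fun θj => ((Γ + ↑(θj.map (Fml.subst σ)) : Multiset (Fml α)), Δ)) ∧
    c = ((Γ + ↑(η.map (Fml.subst σ)) : Multiset (Fml α)), Δ)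

/-- The formula `Ax_R` of a right rule. -/
def AxRight (prems : List (List (Fml α) × Option (Fml α)))
    (θ : List (Fml α)) (η : Option (Fml α)) : Fml α :=
  .imp (.and (conj (prems.map fun pr => .imp (conj pr.1) (odisj pr.2))) (conj θ)) (odisj η)

/-- The formula `Ax_R` of a left rule. -/
def AxLeft (prems : List (List (Fml α) × Option (Fml α)))
    (lefts : List (List (Fml α))) (η : List (Fml α)) : Fml α :=
  .imp (.and (conj (prems.map fun pr => .imp (conj pr.1) (odisj pr.2))) (conj η))
    (disj (lefts.map conj))

/-- The forgetful translation `f_i`: fixes atoms, `⊤`, `⊥`, commutes with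
`∧`, `∨`, `→`, `□`, and sends every `◇A` to `⊥`. -/
def fi : Fml α → Fml α
  | .atom a  => .atom a
  | .top     => .top
  | .bot     => .bot
  | .and A B => .and (fi A) (fi B)
  | .or A B  => .or (fi A) (fi B)
  | .imp A B => .imp (fi A) (fi B)
  | .box A   => .box (fi A)
  | .dia _   => .bot

/-- The forgetful translation `f_r`: fixes atoms, `⊤`, `⊥`, commutes with
`∧`, `∨`, `→`, `□`, and sends `◇A` to `f_r A`. -/
def fr : Fml α → Fml α
  | .atom a  => .atom a
  | .top     => .top
  | .bot     => .bot
  | .and A B => .and (fr A) (fr B)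
  | .or A B  => .or (fr A) (fr B)
  | .imp A B => .imp (fr A) (fr B)
  | .box A   => .box (fr A)
  | .dia A   => fr A


/-! ### Auxiliary machinery: a Kleene/Aczel slash argument -/

section VHProof

variable {Ax : Fml ℕ → Prop}

/-- Abbreviation for derivability in `CK+Ax`. -/
abbrev Der (Ax : Fml ℕ → Prop) (Θ : Multiset (Fml ℕ)) (Δ : Option (Fml ℕ)) : Prop :=
  Derives (CKSys Ax) Θ Δ

lemma no_prem : ∀ p ∈ ([] : List (Seq ℕ)), Der Ax p.1 p.2 := by
  intro p hp; simp at hp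

lemma one_prem {s : Seq ℕ} (h : Der Ax s.1 s.2) : ∀ p ∈ [s], Der Ax p.1 p.2 := by
  intro p hp; rw [List.mem_singleton] at hp; subst hp; exact h

lemma two_prem {s t : Seq ℕ} (h1 : Der Ax s.1 s.2) (h2 : Der Ax t.1 t.2) :
    ∀ p ∈ [s, t], Der Ax p.1 p.2 := by
  intro p hp
  rcases List.mem_pair.mp hp with rfl | rfl
  · exact h1
  · exact h2

lemma dstep {ps : List (Seq ℕ)} {c : Seq ℕ} (h : LJRule ps c)
    (hp : ∀ p ∈ ps, Der Ax p.1 p.2) : Der Ax c.1 c.2 :=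
  .step (Or.inl h) hp

lemma dW1 {Γ : Multiset (Fml ℕ)} {Δ} (A : Fml ℕ) (h : Der Ax Γ Δ) : Der Ax (A ::ₘ Γ) Δ :=
  dstep (.wL A Γ Δ) (one_prem h)

lemma dWeak {Γ' Γ : Multiset (Fml ℕ)} {Δ} (h : Der Ax Γ Δ) : Der Ax (Γ' + Γ) Δ := by
  induction Γ' using Multiset.induction with
  | empty => simpa using h
  | cons a Γ'' ih => rw [Multiset.cons_add]; exact dW1 a ih

lemma dId {Θ : Multiset (Fml ℕ)} {A : Fml ℕ} (h : A ∈ Θ) : Der Ax Θ (some A) := by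
  rw [← Multiset.cons_erase h]
  exact dstep (.id _ A) no_prem

lemma dCutHyp {Γ Θ : Multiset (Fml ℕ)} {Δ} (h : Der Ax Γ Δ)
    (hh : ∀ A ∈ Γ, Der Ax Θ (some A)) : Der Ax Θ Δ := by
  suffices H : ∀ (Γ' : Multiset (Fml ℕ)), (∀ A ∈ Γ', Der Ax Θ (some A)) →
      Der Ax (Γ' + Θ) Δ → Der Ax Θ Δ by
    exact H Γ hh (by rw [add_comm]; exact dWeak h)
  intro Γ'
  induction Γ' using Multiset.induction with
  | empty => intro _ h0; simpa using h0
  | cons a Γ'' ih =>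
      intro hh' h'
      refine ih (fun A hA => hh' A (Multiset.mem_cons_of_mem hA)) ?_
      refine dstep (.cut a (Γ'' + Θ) Δ) (two_prem ?_ ?_)
      · exact dWeak (hh' a (Multiset.mem_cons_self a Γ''))
      · rw [Multiset.cons_add] at h'; exact h'

lemma dNoneBot {Θ : Multiset (Fml ℕ)} (h : Der Ax Θ none) : Der Ax Θ (some .bot) :=
  dstep (.wR .bot Θ) (one_prem h)

lemma dExf {Θ : Multiset (Fml ℕ)} {E : Fml ℕ} (h : Der Ax Θ (some .bot)) :
    Der Ax Θ (some E) := by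
  refine dstep (.cut .bot Θ (some E)) (two_prem h ?_)
  exact dstep (.botL Θ (some E)) no_prem

lemma dMp {Θ : Multiset (Fml ℕ)} {A B : Fml ℕ} (h1 : Der Ax Θ (some (.imp A B)))
    (h2 : Der Ax Θ (some A)) : Der Ax Θ (some B) := by
  refine dstep (.cut (.imp A B) Θ (some B)) (two_prem h1 ?_)
  refine dstep (.impL A B Θ (some B)) (two_prem h2 ?_)
  exact dId (Multiset.mem_cons_self B Θ)

lemma dAnd1 {Θ : Multiset (Fml ℕ)} {A B : Fml ℕ} (h : Der Ax Θ (some (.and A B))) :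
    Der Ax Θ (some A) := by
  refine dstep (.cut (.and A B) Θ (some A)) (two_prem h ?_)
  refine dstep (.andL₁ A B Θ (some A)) (one_prem ?_)
  exact dId (Multiset.mem_cons_self A Θ)

lemma dAnd2 {Θ : Multiset (Fml ℕ)} {A B : Fml ℕ} (h : Der Ax Θ (some (.and A B))) :
    Der Ax Θ (some B) := by
  refine dstep (.cut (.and A B) Θ (some B)) (two_prem h ?_)
  refine dstep (.andL₂ A B Θ (some B)) (one_prem ?_)
  exact dId (Multiset.mem_cons_self B Θ)

lemma dAxInst {Θ : Multiset (Fml ℕ)} {A : Fml ℕ} (hA : Ax A) (σ : ℕ → Fml ℕ) :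
    Der Ax Θ (some (A.subst σ)) := by
  have h0 : Der Ax 0 (some (A.subst σ)) :=
    @Derives.step ℕ (CKSys Ax) [] ((0 : Multiset (Fml ℕ)), some (A.subst σ))
      (Or.inr (Or.inr (Or.inr ⟨rfl, A, σ, hA, rfl⟩))) no_prem
  have := dWeak (Γ' := Θ) h0
  rwa [add_zero] at this

/-- The slash relation relative to a context `Θ`.  The flag `t` records whether
the `T` axioms belong to the calculus (the "T-full" case). -/
def Slash (t : Bool) (Ax : Fml ℕ → Prop) (Θ : Multiset (Fml ℕ)) : Fml ℕ → Prop
  | .atom a => Der Ax Θ (some (.atom a))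
  | .top => True
  | .bot => Der Ax Θ (some .bot)
  | .and A B => Slash t Ax Θ A ∧ Slash t Ax Θ B
  | .or A B => Der Ax Θ (some (.or A B)) ∧ (Slash t Ax Θ A ∨ Slash t Ax Θ B)
  | .imp A B => Der Ax Θ (some (.imp A B)) ∧ (Slash t Ax Θ A → Slash t Ax Θ B)
  | .box A => Der Ax Θ (some (.box A)) ∧ (t = true → Slash t Ax Θ A)
  | .dia A => Der Ax Θ (some (.dia A)) ∧ (t = true → Slash t Ax Θ A) ∧
      (t = false → Der Ax Θ (some .bot))

lemma slash_der {t : Bool} {Θ : Multiset (Fml ℕ)} :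
    ∀ {E : Fml ℕ}, Slash t Ax Θ E → Der Ax Θ (some E)
  | .atom _, h => h
  | .top, _ => dstep (.topR Θ) no_prem
  | .bot, h => h
  | .and A B, h => dstep (.andR A B Θ) (two_prem (slash_der h.1) (slash_der h.2))
  | .or _ _, h => h.1
  | .imp _ _, h => h.1
  | .box _, h => h.1
  | .dia _, h => h.1

lemma bot_slash {t : Bool} {Θ : Multiset (Fml ℕ)} (hb : Der Ax Θ (some .bot)) :
    ∀ E : Fml ℕ, Slash t Ax Θ E := by
  intro E
  induction E with
  | atom a => exact dExf hb
  | top => trivial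
  | bot => exact hb
  | and A B ihA ihB => exact ⟨ihA, ihB⟩
  | or A B ihA ihB => exact ⟨dExf hb, Or.inl ihA⟩
  | imp A B ihA ihB => exact ⟨dExf hb, fun _ => ihB⟩
  | box A ih => exact ⟨dExf hb, fun _ => ih⟩
  | dia A ih => exact ⟨dExf hb, fun _ => ih, fun _ => hb⟩

/-- Slash for succedents. -/
def SlashO (t : Bool) (Ax : Fml ℕ → Prop) (Θ : Multiset (Fml ℕ)) : Option (Fml ℕ) → Prop
  | none => Der Ax Θ (some .bot)
  | some E => Slash t Ax Θ E

lemma botSlashO {t : Bool} {Θ : Multiset (Fml ℕ)} (hb : Der Ax Θ (some .bot)) :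
    ∀ Δ : Option (Fml ℕ), SlashO t Ax Θ Δ
  | none => hb
  | some E => bot_slash hb E

theorem slash_sound {t : Bool} {Θ : Multiset (Fml ℕ)}
    (hax : ∀ A, Ax A → ∀ σ : ℕ → Fml ℕ, Slash t Ax Θ (A.subst σ))
    {Γ : Multiset (Fml ℕ)} {Δ : Option (Fml ℕ)} (h : Derives (CKSys Ax) Γ Δ) :
    (∀ A ∈ Γ, Slash t Ax Θ A) → SlashO t Ax Θ Δ := by
  induction h with
  | @step ps c hr hp ih =>
    intro hΓ
    have dC : Der Ax Θ c.2 :=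
      dCutHyp (Derives.step hr hp) (fun A hA => slash_der (hΓ A hA))
    rcases hr with hlj | hkb | hkd | hax'
    · cases hlj with
      | id Γ' A => exact hΓ A (Multiset.mem_cons_self A Γ')
      | botL Γ' Δ' => exact botSlashO (hΓ .bot (Multiset.mem_cons_self _ _)) Δ'
      | topR Γ' => exact trivial
      | wL A Γ' Δ' =>
          exact ih (Γ', Δ') (by simp) fun X hX => hΓ X (Multiset.mem_cons_of_mem hX)
      | wR A Γ' => exact bot_slash (ih (Γ', none) (by simp) hΓ) A
      | cL A Γ' Δ' =>
          refine ih (A ::ₘ A ::ₘ Γ', Δ') (by simp) ?_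
          intro X hX
          rcases Multiset.mem_cons.mp hX with rfl | hX'
          · exact hΓ X (Multiset.mem_cons_self X Γ')
          · exact hΓ X hX'
      | cut A Γ' Δ' =>
          have sA : Slash t Ax Θ A := ih (Γ', some A) (by simp) hΓ
          refine ih (A ::ₘ Γ', Δ') (by simp) ?_
          intro X hX
          rcases Multiset.mem_cons.mp hX with rfl | hX'
          · exact sA
          · exact hΓ X hX'
      | andL₁ A B Γ' Δ' =>
          refine ih (A ::ₘ Γ', Δ') (by simp) ?_
          intro X hX
          rcases Multiset.mem_cons.mp hX with rfl | hX'
          · exact (hΓ (.and X B) (Multiset.mem_cons_self _ _)).1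
          · exact hΓ X (Multiset.mem_cons_of_mem hX')
      | andL₂ A B Γ' Δ' =>
          refine ih (B ::ₘ Γ', Δ') (by simp) ?_
          intro X hX
          rcases Multiset.mem_cons.mp hX with rfl | hX'
          · exact (hΓ (.and A X) (Multiset.mem_cons_self _ _)).2
          · exact hΓ X (Multiset.mem_cons_of_mem hX')
      | andR A B Γ' =>
          exact ⟨ih (Γ', some A) (by simp) hΓ, ih (Γ', some B) (by simp) hΓ⟩
      | orL A B Γ' Δ' =>
          have hrest : ∀ X ∈ Γ', Slash t Ax Θ X :=
            fun X hX => hΓ X (Multiset.mem_cons_of_mem hX)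
          rcases (hΓ (.or A B) (Multiset.mem_cons_self _ _)).2 with sA | sB
          · refine ih (A ::ₘ Γ', Δ') (by simp) ?_
            intro X hX
            rcases Multiset.mem_cons.mp hX with rfl | hX'
            · exact sA
            · exact hrest X hX'
          · refine ih (B ::ₘ Γ', Δ') (by simp) ?_
            intro X hX
            rcases Multiset.mem_cons.mp hX with rfl | hX'
            · exact sB
            · exact hrest X hX'
      | orR₁ A B Γ' => exact ⟨dC, Or.inl (ih (Γ', some A) (by simp) hΓ)⟩
      | orR₂ A B Γ' => exact ⟨dC, Or.inr (ih (Γ', some B) (by simp) hΓ)⟩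
      | impL A B Γ' Δ' =>
          have hrest : ∀ X ∈ Γ', Slash t Ax Θ X :=
            fun X hX => hΓ X (Multiset.mem_cons_of_mem hX)
          have sA : Slash t Ax Θ A := ih (Γ', some A) (by simp) hrest
          have sB : Slash t Ax Θ B := (hΓ (.imp A B) (Multiset.mem_cons_self _ _)).2 sA
          refine ih (B ::ₘ Γ', Δ') (by simp) ?_
          intro X hX
          rcases Multiset.mem_cons.mp hX with rfl | hX'
          · exact sB
          · exact hrest X hX'
      | impR A B Γ' =>
          refine ⟨dC, fun sA => ih (A ::ₘ Γ', some B) (by simp) ?_⟩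
          intro X hX
          rcases Multiset.mem_cons.mp hX with rfl | hX'
          · exact sA
          · exact hΓ X hX'
    · cases hkb with
      | mk Γ' A =>
          refine ⟨dC, fun ht => ih (Γ', some A) (by simp) ?_⟩
          intro X hX
          exact (hΓ (.box X) (Multiset.mem_map_of_mem _ hX)).2 ht
    · cases hkd with
      | mk Γ' A B =>
          have hdia := hΓ (.dia A) (Multiset.mem_cons_self _ _)
          refine ⟨dC, fun ht => ?_, fun ht => hdia.2.2 ht⟩
          refine ih (A ::ₘ Γ', some B) (by simp) ?_
          intro X hX
          rcases Multiset.mem_cons.mp hX with rfl | hX'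
          · exact hdia.2.1 ht
          · exact (hΓ (.box X)
              (Multiset.mem_cons_of_mem (Multiset.mem_map_of_mem _ hX'))).2 ht
    · obtain ⟨hps, A, σ, hA, hc⟩ := hax'
      subst hc
      exact hax A hA σ

lemma harrop_slash {t : Bool} {Θ : Multiset (Fml ℕ)}
    (hT : t = true → ∀ p : Fml ℕ, Der Ax Θ (some (.imp (.box p) p)))
    {H : Fml ℕ} (hH : Harrop H) : Der Ax Θ (some H) → Slash t Ax Θ H := by
  induction hH with
  | atom a => exact fun hd => hd
  | top => exact fun _ => trivial
  | bot => exact fun hd => hd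
  | and hA hB ihA ihB => exact fun hd => ⟨ihA (dAnd1 hd), ihB (dAnd2 hd)⟩
  | box hA ih => exact fun hd => ⟨hd, fun ht => ih (dMp (hT ht _) hd)⟩
  | imp A hB ih => exact fun hd => ⟨hd, fun sA => ih (dMp hd (slash_der sA))⟩

theorem vh_main (t : Bool)
    (hax : ∀ Θ : Multiset (Fml ℕ), ∀ A, Ax A → ∀ σ : ℕ → Fml ℕ, Slash t Ax Θ (A.subst σ))
    (hTa : t = true → ∀ (Θ : Multiset (Fml ℕ)) (p : Fml ℕ),
      Der Ax Θ (some (.imp (.box p) p))) :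
    VisserHarrop (CKSys Ax) := by
  intro Γ hΓ AB C D hder
  set Θ := Γ + imps AB with hΘ
  by_cases hc : ∃ p ∈ AB, Derives (CKSys Ax) Θ (some p.1)
  · exact Or.inr (Or.inr hc)
  have hsl : ∀ X ∈ Θ, Slash t Ax Θ X := by
    intro X hX
    rcases Multiset.mem_add.mp hX with h1 | h2
    · exact harrop_slash (fun ht => hTa ht Θ) (hΓ X h1) (dId hX)
    · have hex : ∃ ab ∈ AB, Fml.imp ab.1 ab.2 = X := by
        simpa [imps] using h2
      obtain ⟨ab, habAB, rfl⟩ := hex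
      exact ⟨dId hX, fun sA => absurd ⟨ab, habAB, slash_der sA⟩ hc⟩
  have hso : SlashO t Ax Θ (some (.or C D)) := slash_sound (hax Θ) hder hsl
  rcases hso.2 with sC | sD
  · exact Or.inl (slash_der sC)
  · exact Or.inr (Or.inl (slash_der sD))

end VHProof

lemma vh_disj {R : RuleSet ℕ} (h : VisserHarrop R) : DisjProp R := by
  intro C D hd
  have h0 : (0 : Multiset (Fml ℕ)) + imps [] = 0 := by simp [imps]
  have hres := h 0 (by intro A hA; simp at hA) [] C D (by rw [h0]; exact hd)
  rw [h0] at hres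
  rcases hres with h1 | h2 | ⟨p, hp, _⟩
  · exact Or.inl h1
  · exact Or.inr h2
  · simp at hp

theorem slash_ax {tT tB t4 t5 ik : Bool} {Θ : Multiset (Fml ℕ)} {A : Fml ℕ}
    (hA : A ∈ XAxioms tT tB t4 t5 ∪ if ik then IKExtra else ∅) (σ : ℕ → Fml ℕ) :
    Slash tT (· ∈ XAxioms tT tB t4 t5 ∪ if ik then IKExtra else ∅) Θ (A.subst σ) := by
  have memTa : tT = true → axTa ∈ XAxioms tT tB t4 t5 ∪ if ik then IKExtra else ∅ := by
    intro h; subst h; left; simp [XAxioms]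
  have memTb : tT = true → axTb ∈ XAxioms tT tB t4 t5 ∪ if ik then IKExtra else ∅ := by
    intro h; subst h; left; simp [XAxioms]
  have dTa : tT = true → ∀ P : Fml ℕ,
      Der (· ∈ XAxioms tT tB t4 t5 ∪ if ik then IKExtra else ∅) Θ (some (.imp (.box P) P)) :=
    fun h P => dAxInst (memTa h) (fun _ => P)
  have dTb : tT = true → ∀ P : Fml ℕ,
      Der (· ∈ XAxioms tT tB t4 t5 ∪ if ik then IKExtra else ∅) Θ (some (.imp P (.dia P))) :=
    fun h P => dAxInst (memTb h) (fun _ => P)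
  have dax : Der (· ∈ XAxioms tT tB t4 t5 ∪ if ik then IKExtra else ∅) Θ
      (some (A.subst σ)) := dAxInst hA σ
  have hA' : (tT = true ∧ (A = axTa ∨ A = axTb)) ∨ (tB = true ∧ (A = axBa ∨ A = axBb)) ∨
      (t4 = true ∧ (A = ax4a ∨ A = ax4b)) ∨ (t5 = true ∧ (A = ax5a ∨ A = ax5b)) ∨
      (ik = true ∧ (A = axDiaBot ∨ A = axDiaOr ∨ A = axBoxImp)) := by
    rcases hA with h | h
    · cases tT <;> cases tB <;> cases t4 <;> cases t5 <;> simp_all [XAxioms] <;> tauto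
    · cases ik <;> simp_all [IKExtra]
  clear hA
  rcases hA' with ⟨htT, rfl | rfl⟩ | ⟨htB, rfl | rfl⟩ | ⟨ht4, rfl | rfl⟩ |
    ⟨ht5, rfl | rfl⟩ | ⟨hik, rfl | rfl | rfl⟩
  · subst htT
    exact ⟨dax, fun hs => hs.2 rfl⟩
  · subst htT
    exact ⟨dax, fun hs => ⟨dMp dax (slash_der hs), fun _ => hs, fun h => nomatch h⟩⟩
  · cases tT
    · exact ⟨dax, fun hs => bot_slash (hs.2.2 rfl) _⟩
    · exact ⟨dax, fun hs => (hs.2.1 rfl).2 rfl⟩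
  · cases tT
    · exact ⟨dax, fun hs => ⟨dMp dax (slash_der hs), fun h => nomatch h⟩⟩
    · exact ⟨dax, fun hs => ⟨dMp dax (slash_der hs), fun _ =>
        ⟨dMp (dTb rfl _) (slash_der hs), fun _ => hs, fun h => nomatch h⟩⟩⟩
  · exact ⟨dax, fun hs => ⟨dMp dax hs.1, fun _ => hs⟩⟩
  · cases tT
    · exact ⟨dax, fun hs => bot_slash (hs.2.2 rfl) _⟩
    · exact ⟨dax, fun hs => hs.2.1 rfl⟩
  · cases tT
    · exact ⟨dax, fun hs => bot_slash (hs.2.2 rfl) _⟩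
    · exact ⟨dax, fun hs => hs.2.1 rfl⟩
  · exact ⟨dax, fun hs => ⟨dMp dax hs.1, fun _ => hs⟩⟩
  · cases tT
    · exact ⟨dax, fun hs => hs.2.2 rfl⟩
    · exact ⟨dax, fun hs => hs.2.1 rfl⟩
  · cases tT
    · exact ⟨dax, fun hs => bot_slash (hs.2.2 rfl) _⟩
    · refine ⟨dax, fun hs => ⟨dMp dax hs.1, ?_⟩⟩
      rcases (hs.2.1 rfl).2 with sp | sq
      · exact Or.inl ⟨dMp (dTb rfl _) (slash_der sp), fun _ => sp, fun h => nomatch h⟩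
      · exact Or.inr ⟨dMp (dTb rfl _) (slash_der sq), fun _ => sq, fun h => nomatch h⟩
  · cases tT
    · exact ⟨dax, fun hs => ⟨dMp dax hs.1, fun h => nomatch h⟩⟩
    · refine ⟨dax, fun hs => ?_⟩
      have d1 := dMp dax hs.1
      exact ⟨d1, fun _ => ⟨dMp (dTa rfl _) d1, fun sp =>
        (hs.2 ⟨dMp (dTb rfl _) (slash_der sp), fun _ => sp, fun h => nomatch h⟩).2 rfl⟩⟩

theorem vh_both (tT tB t4 t5 : Bool) (ik : Bool) :
    VisserHarrop (CKSys (· ∈ XAxioms tT tB t4 t5 ∪ if ik then IKExtra else ∅)) := by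
  refine vh_main tT (fun Θ A hA σ => slash_ax hA σ) ?_
  intro ht Θ p
  have memTa : axTa ∈ XAxioms tT tB t4 t5 ∪ if ik then IKExtra else ∅ := by
    subst ht; left; simp [XAxioms]
  exact dAxInst memTa (fun _ => p)

/-- For every `X ⊆ {T, B, 4, 5}`, the sequent calculi `CKX` and
`IKX` have the Visser–Harrop property; in particular each of them has the
disjunction property. -/
theorem statement_2 (tT tB t4 t5 : Bool) :
    VisserHarrop (CKSys (· ∈ XAxioms tT tB t4 t5)) ∧
    VisserHarrop (CKSys (· ∈ XAxioms tT tB t4 t5 ∪ IKExtra)) ∧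
    DisjProp (CKSys (· ∈ XAxioms tT tB t4 t5)) ∧
    DisjProp (CKSys (· ∈ XAxioms tT tB t4 t5 ∪ IKExtra)) := by
  have e0 : (XAxioms tT tB t4 t5 ∪ if (false : Bool) then IKExtra else ∅)
      = XAxioms tT tB t4 t5 := by simp
  have e1 : (XAxioms tT tB t4 t5 ∪ if (true : Bool) then IKExtra else ∅)
      = XAxioms tT tB t4 t5 ∪ IKExtra := by simp
  have v0 := vh_both tT tB t4 t5 false
  have v1 := vh_both tT tB t4 t5 true
  rw [e0] at v0
  rw [e1] at v1
  exact ⟨v0, v1, vh_disj v0, vh_disj v1⟩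

end UPT
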